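/- arXiv:1604.01195 — 2 statements merged into one kernel-verified Lean document; each statement's English description precedes it below -/
import Mathlib

section
/- Let X be a metric space that is uniformly perfect in the large with constant c ∈ (0,1): for all x ∈ X and all sufficiently large T, B(x,T) \ B(x,cT) ≠ ∅. Then for every R > 0 and every x ∈ X, the number of pairwise disjoint balls of radius R that can be packed inside B(x,T) tends to infinity as T → ∞; quantitatively, B(x,T) contains at least ⌊log_{(2+c)/c}(T/R)⌋ pairwise disjoint balls of radius R (for T large enough). -/
/-!
With `γ = 2 / c`, pick `q n` in the annulus `B(x, Aγⁿ) \ B(x, cAγⁿ)` for a fixed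
`A ≥ max T₀ (2R)`. Since `cAγⁿ⁺¹ = 2Aγⁿ`, the triangle inequality puts these points more than
`Aγⁿ ≥ 2R` apart, so the closed `R`-balls around them are pairwise disjoint. Writing
`(2 + c) / c = γρ` with `ρ = (2 + c) / 2 > 1`, the first `k = ⌊log_{γρ}(T/R)⌋` of the `R`-balls
stay in `B(x, T)` as soon as `ρᵏ ≥ 1 + A/R`, because `T ≥ R (γρ)ᵏ`; and `k → ∞` as `T → ∞`.
-/

open Metric Real Filter

theorem sub_lt_dist_of_mem_closedBall_of_notMem_closedBall {X : Type*} [PseudoMetricSpace X]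
    {x p p' : X} {r s : ℝ} (hp : p ∈ closedBall x r) (hp' : p' ∉ closedBall x s) :
    s - r < dist p p' := by
  rw [mem_closedBall] at hp
  rw [mem_closedBall, not_le] at hp'
  linarith [dist_triangle_left p' x p]

theorem exists_seq_mem_closedBall_pairwise_lt_dist {X : Type*} [PseudoMetricSpace X] {x : X}
    {c T₀ A : ℝ} (hc0 : 0 < c) (hc2 : c ≤ 2) (hA0 : 0 ≤ A) (hA : T₀ ≤ A)
    (hup : ∀ T ≥ T₀, (closedBall x T \ closedBall x (c * T)).Nonempty) :
    ∃ q : ℕ → X, (∀ n, q n ∈ closedBall x (A * (2 / c) ^ n)) ∧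
      Pairwise fun m n => A < dist (q m) (q n) := by
  have hγ : 1 ≤ 2 / c := by rw [le_div_iff₀ hc0]; linarith
  have hAγ (n : ℕ) : A ≤ A * (2 / c) ^ n := le_mul_of_one_le_right hA0 (one_le_pow₀ hγ)
  choose q hq_in hq_out using fun n : ℕ => hup (A * (2 / c) ^ n) (hA.trans (hAγ n))
  have hsep (m n : ℕ) (hmn : m < n) : A < dist (q m) (q n) := by
    have hgap : 2 * (A * (2 / c) ^ m) ≤ c * (A * (2 / c) ^ n) :=
      calc 2 * (A * (2 / c) ^ m) = c * (A * (2 / c) ^ (m + 1)) := by rw [pow_succ]; field_simp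
        _ ≤ c * (A * (2 / c) ^ n) := by gcongr; exact hmn
    linarith [hAγ m, sub_lt_dist_of_mem_closedBall_of_notMem_closedBall (hq_in m) (hq_out n)]
  refine ⟨q, hq_in, fun m n hmn => ?_⟩
  rcases hmn.lt_or_gt with h | h
  · exact hsep m n h
  · rw [dist_comm]; exact hsep n m h

theorem add_mul_pow_le_mul_mul_pow {R A γ ρ : ℝ} {i k : ℕ} (hR : 0 ≤ R) (hA : 0 ≤ A)
    (hγ : 1 ≤ γ) (hik : i ≤ k) (hρk : R + A ≤ R * ρ ^ k) :
    R + A * γ ^ i ≤ R * (γ * ρ) ^ k :=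
  calc R + A * γ ^ i ≤ (R + A) * γ ^ i := by nlinarith [one_le_pow₀ (n := i) hγ]
    _ ≤ R * ρ ^ k * γ ^ i := by gcongr
    _ ≤ R * ρ ^ k * γ ^ k := by gcongr; linarith
    _ = R * (γ * ρ) ^ k := by ring

theorem pow_natFloor_logb_le {b y : ℝ} (hb : 1 < b) (hy : 1 ≤ y) : b ^ ⌊logb b y⌋₊ ≤ y := by
  rw [← rpow_natCast, ← le_logb_iff_rpow_le hb (by linarith)]
  exact Nat.floor_le (logb_nonneg hb hy)

/-- In a metric space which is uniformly perfect in the large with constant `c ∈ (0,1)`,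
every ball `B(x,T)` (for `T` large enough) contains at least `⌊log_{(2+c)/c}(T/R)⌋`
pairwise disjoint balls of radius `R`. -/
theorem uniformly_perfect_packing {X : Type*} [MetricSpace X] (c : ℝ)
    (hc0 : 0 < c) (hc1 : c < 1) (T₀ : ℝ)
    (hup : ∀ x : X, ∀ T ≥ T₀,
      ((Metric.closedBall x T) \ (Metric.closedBall x (c * T))).Nonempty)
    (R : ℝ) (hR : 0 < R) (x : X) :
    ∃ T₁ : ℝ, ∀ T ≥ T₁,
      ∃ y : Fin ⌊Real.logb ((2 + c) / c) (T / R)⌋₊ → X,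
        (∀ i, Metric.closedBall (y i) R ⊆ Metric.closedBall x T) ∧
        (∀ i j, i ≠ j →
          Disjoint (Metric.closedBall (y i) R) (Metric.closedBall (y j) R)) := by
  set A := max T₀ (2 * R)
  have hRA : 2 * R ≤ A := le_max_right _ _
  obtain ⟨q, hq_mem, hq_sep⟩ := exists_seq_mem_closedBall_pairwise_lt_dist hc0 (by linarith)
    (by linarith) (le_max_left _ _) (hup x)
  have hρ : 1 < (2 + c) / 2 := by linarith
  have hb : 1 < (2 + c) / c := by rw [lt_div_iff₀ hc0]; linarith
  obtain ⟨k₀, hk₀⟩ := pow_unbounded_of_one_lt ((R + A) / R) hρ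
  obtain ⟨T₁, hT₁⟩ := eventually_atTop.1 <|
    ((tendsto_nat_floor_atTop.comp ((tendsto_logb_atTop hb).comp
      (tendsto_id.atTop_div_const hR))).eventually_ge_atTop k₀).and (eventually_ge_atTop R)
  refine ⟨T₁, fun T hT => ?_⟩
  obtain ⟨hk, hRT⟩ := hT₁ T hT
  set k := ⌊logb ((2 + c) / c) (T / R)⌋₊
  have hTk : R * ((2 + c) / c) ^ k ≤ T :=
    (le_div_iff₀' hR).1 (pow_natFloor_logb_le hb ((one_le_div hR).2 hRT))
  have hρk : R + A ≤ R * ((2 + c) / 2) ^ k :=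
    ((div_lt_iff₀' hR).1 (hk₀.trans_le (pow_le_pow_right₀ hρ.le hk))).le
  refine ⟨fun i => q i, fun i => closedBall_subset_closedBall' ?_,
    fun i j hij => closedBall_disjoint_closedBall ?_⟩
  · have hi := add_mul_pow_le_mul_mul_pow hR.le (by linarith) (γ := 2 / c)
      (by rw [le_div_iff₀ hc0]; linarith) i.2.le hρk
    rw [show 2 / c * ((2 + c) / 2) = (2 + c) / c by field_simp] at hi
    linarith [mem_closedBall.1 (hq_mem i)]
  · linarith [hq_sep (Fin.val_injective.ne hij)]
end

section
/- Let u(t) = log(log(t)) for t ≥ m where m = max{(ℓ+1)/(ℓ-1), e} and ℓ > 1, extended by u(t) = log(log m) for t < m. Fix p > 1. For any finite family {[a_j,b_j]} of pairwise disjoint intervals in [m,∞) with b_j ≤ m·a_j for all j, one has ∑_j (u(b_j) - u(a_j))^p ≤ ∑_{i=1}^∞ (2/i)^p + C(ℓ,p), where C(ℓ,p) depends only on ℓ and p (it bounds the contribution of at most one exceptional interval, by u(m²)^p). -/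
/-!
Sort the intervals by the window `[m^(n+1), m^(n+2))` containing their left endpoint. Since
`b ≤ m a`, every interval of window `n` lies in `[m^(n+1), m^(n+3)]`, across which `log ∘ log`
increases by `log ((n+3)/(n+1)) ≤ 2/(n+1)`. The intervals being disjoint and `u` increasing, the
`u`-increments of one window add up to at most that, and `∑ xⱼ^p ≤ (∑ xⱼ)^p` turns this into
`(2/(n+1))^p`. Summing over the windows gives the bound with `C = 0`.
-/

open Real Finset MeasureTheory

theorem Real.sum_rpow_le_rpow_sum {ι : Type*} {p : ℝ} (hp : 1 ≤ p) (s : Finset ι) {x : ι → ℝ}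
    (hx : ∀ j ∈ s, 0 ≤ x j) : ∑ j ∈ s, x j ^ p ≤ (∑ j ∈ s, x j) ^ p := by
  classical
  induction s using Finset.induction with
  | empty => simp [Real.zero_rpow (by linarith : p ≠ 0)]
  | insert c s hc ih =>
    rw [sum_insert hc, sum_insert hc]
    have hx' : ∀ j ∈ s, 0 ≤ x j := fun j hj => hx j (mem_insert_of_mem hj)
    calc x c ^ p + ∑ j ∈ s, x j ^ p ≤ x c ^ p + (∑ j ∈ s, x j) ^ p := by gcongr; exact ih hx'
      _ ≤ (x c + ∑ j ∈ s, x j) ^ p :=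
        add_rpow_le_rpow_add (hx c (mem_insert_self c s)) (sum_nonneg hx') hp

theorem Set.disjoint_Icc_Icc_iff {α : Type*} [LinearOrder α] {a b c d : α} (hab : a ≤ b)
    (hcd : c ≤ d) : Disjoint (Set.Icc a b) (Set.Icc c d) ↔ b < c ∨ d < a := by
  refine ⟨fun h => ?_, ?_⟩
  · by_contra! hcon
    have hac : max a c ∈ Set.Icc a b := ⟨le_max_left _ _, max_le hab hcon.1⟩
    exact Set.disjoint_left.mp h hac ⟨le_max_right _ _, max_le hcon.2 hcd⟩
  · rintro (h | h) <;> refine Set.disjoint_left.mpr fun t ht ht' => ?_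
    · exact (ht.2.trans_lt h).not_ge ht'.1
    · exact (ht'.2.trans_lt h).not_ge ht.1

theorem StrictMonoOn.disjoint_Icc_Icc {α β : Type*} [LinearOrder α] [LinearOrder β] {f : α → β}
    {s : Set α} (hf : StrictMonoOn f s) {a b c d : α} (ha : a ∈ s) (hb : b ∈ s) (hc : c ∈ s)
    (hd : d ∈ s) (hab : a ≤ b) (hcd : c ≤ d) (h : Disjoint (Set.Icc a b) (Set.Icc c d)) :
    Disjoint (Set.Icc (f a) (f b)) (Set.Icc (f c) (f d)) := by
  rw [Set.disjoint_Icc_Icc_iff hab hcd] at h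
  rw [Set.disjoint_Icc_Icc_iff (hf.monotoneOn ha hb hab) (hf.monotoneOn hc hd hcd)]
  exact h.imp (hf hb hc) (hf hd ha)

theorem Finset.sum_sub_le_of_pairwiseDisjoint_Icc {ι : Type*} (s : Finset ι) {a b : ι → ℝ}
    {A B : ℝ} (hAB : A ≤ B) (hab : ∀ j ∈ s, a j ≤ b j)
    (hsub : ∀ j ∈ s, Set.Icc (a j) (b j) ⊆ Set.Icc A B)
    (hd : (s : Set ι).PairwiseDisjoint fun j => Set.Icc (a j) (b j)) :
    ∑ j ∈ s, (b j - a j) ≤ B - A := by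
  have hvol : ∑ j ∈ s, volume (Set.Icc (a j) (b j)) ≤ volume (Set.Icc A B) := by
    rw [← measure_biUnion_finset hd fun _ _ => measurableSet_Icc]
    exact measure_mono (Set.iUnion₂_subset hsub)
  simp only [Real.volume_Icc] at hvol
  rwa [← ENNReal.ofReal_sum_of_nonneg (fun j hj => sub_nonneg.2 (hab j hj)),
    ENNReal.ofReal_le_ofReal_iff (sub_nonneg.2 hAB)] at hvol

theorem StrictMonoOn.sum_rpow_sub_le_rpow_sub {ι : Type*} {f : ℝ → ℝ} {A B p : ℝ}
    (hf : StrictMonoOn f (Set.Icc A B)) (hp : 1 ≤ p) (hAB : A ≤ B) (s : Finset ι) {a b : ι → ℝ}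
    (hab : ∀ j ∈ s, a j ≤ b j) (hsub : ∀ j ∈ s, Set.Icc (a j) (b j) ⊆ Set.Icc A B)
    (hd : (s : Set ι).PairwiseDisjoint fun j => Set.Icc (a j) (b j)) :
    ∑ j ∈ s, (f (b j) - f (a j)) ^ p ≤ (f B - f A) ^ p := by
  have hmem : ∀ j ∈ s, a j ∈ Set.Icc A B ∧ b j ∈ Set.Icc A B := fun j hj =>
    ⟨hsub j hj ⟨le_rfl, hab j hj⟩, hsub j hj ⟨hab j hj, le_rfl⟩⟩
  have hmono : ∀ j ∈ s, f (a j) ≤ f (b j) := fun j hj =>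
    hf.monotoneOn (hmem j hj).1 (hmem j hj).2 (hab j hj)
  have hincr : ∑ j ∈ s, (f (b j) - f (a j)) ≤ f B - f A := by
    refine sum_sub_le_of_pairwiseDisjoint_Icc s (hf.monotoneOn ⟨le_rfl, hAB⟩ ⟨hAB, le_rfl⟩ hAB)
      hmono (fun j hj => Set.Icc_subset_Icc ?_ ?_) (fun j hj k hk hjk => ?_)
    · exact hf.monotoneOn ⟨le_rfl, hAB⟩ (hmem j hj).1 (hmem j hj).1.1
    · exact hf.monotoneOn (hmem j hj).2 ⟨hAB, le_rfl⟩ (hmem j hj).2.2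
    · exact hf.disjoint_Icc_Icc (hmem j hj).1 (hmem j hj).2 (hmem k hk).1 (hmem k hk).2
        (hab j hj) (hab k hk) (hd hj hk hjk)
  have hnonneg : ∀ j ∈ s, 0 ≤ f (b j) - f (a j) := fun j hj => sub_nonneg.2 (hmono j hj)
  calc ∑ j ∈ s, (f (b j) - f (a j)) ^ p ≤ (∑ j ∈ s, (f (b j) - f (a j))) ^ p :=
        Real.sum_rpow_le_rpow_sum hp s hnonneg
    _ ≤ (f B - f A) ^ p := by gcongr; exact sum_nonneg hnonneg

theorem Finset.sum_le_tsum_of_sum_fiber_le {ι : Type*} [DecidableEq ι] (s : Finset ι)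
    (g : ι → ℕ) {f : ι → ℝ} {c : ℕ → ℝ} (hc : ∀ n, 0 ≤ c n) (hcs : Summable c)
    (hfiber : ∀ n, ∑ j ∈ s with g j = n, f j ≤ c n) :
    ∑ j ∈ s, f j ≤ ∑' n, c n := by
  rw [← sum_fiberwise_of_maps_to (fun j hj => mem_image_of_mem g hj)]
  exact (sum_le_sum fun n _ => hfiber n).trans (hcs.sum_le_tsum _ fun n _ => hc n)

theorem summable_two_div_nat_add_one_rpow {p : ℝ} (hp : 1 < p) :
    Summable fun n : ℕ => (2 / ((n : ℝ) + 1)) ^ p := by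
  refine (((Real.summable_one_div_nat_add_rpow 1 p).2 hp).mul_left (2 ^ p)).congr fun n => ?_
  rw [abs_of_pos (by positivity), div_rpow (by norm_num) (by positivity), mul_one_div]

theorem exists_pow_succ_le_and_le_pow_add_three {m a b : ℝ} (hm : 1 < m) (ha : m ≤ a)
    (hb : b ≤ m * a) : ∃ n : ℕ, m ^ (n + 1) ≤ a ∧ b ≤ m ^ (n + 3) := by
  have hm0 : 0 < m := zero_lt_one.trans hm
  obtain ⟨n, hlow, hhigh⟩ := exists_nat_pow_near ((one_le_div hm0).2 ha) hm
  refine ⟨n, ?_, hb.trans ?_⟩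
  · rw [pow_succ, ← le_div_iff₀ hm0]; exact hlow
  · have ha' : a ≤ m ^ (n + 2) := by rw [pow_succ]; exact ((div_lt_iff₀ hm0).1 hhigh).le
    calc m * a ≤ m * m ^ (n + 2) := by gcongr
      _ = m ^ (n + 3) := by ring

theorem Real.log_log_pow_add_three_sub_le {x : ℝ} (hx : 1 < x) (n : ℕ) :
    log (log (x ^ (n + 3))) - log (log (x ^ (n + 1))) ≤ 2 / (n + 1) := by
  have hL : log x ≠ 0 := (log_pos hx).ne'
  rw [log_pow, log_pow, log_mul (by positivity) hL, log_mul (by positivity) hL,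
    add_sub_add_right_eq_sub, ← log_div (by positivity) (by positivity)]
  calc log ((↑(n + 3) : ℝ) / ↑(n + 1)) ≤ ↑(n + 3) / ↑(n + 1) - 1 :=
        log_le_sub_one_of_pos (by positivity)
    _ = 2 / (n + 1) := by field_simp; push_cast; ring

theorem Real.strictMonoOn_log_log : StrictMonoOn (fun t => log (log t)) (Set.Ioi 1) :=
  strictMonoOn_log.comp (strictMonoOn_log.mono (Set.Ioi_subset_Ioi zero_le_one))
    fun _ ht => log_pos ht

theorem halfline_energy_bound_general (ℓ p m : ℝ) (hp : 1 < p)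
    (hm : m = max ((ℓ + 1) / (ℓ - 1)) (Real.exp 1))
    (u : ℝ → ℝ)
    (hu : ∀ t, u t = if t < m then Real.log (Real.log m) else Real.log (Real.log t)) :
    ∃ C : ℝ, ∀ {ι : Type} (J : Finset ι) (a b : ι → ℝ),
      (∀ j ∈ J, m ≤ a j) → (∀ j ∈ J, a j ≤ b j) → (∀ j ∈ J, b j ≤ m * a j) →
      (∀ j ∈ J, ∀ k ∈ J, j ≠ k → Disjoint (Set.Icc (a j) (b j)) (Set.Icc (a k) (b k))) →
      ∑ j ∈ J, (u (b j) - u (a j)) ^ p ≤ (∑' i : ℕ, (2 / ((i : ℝ) + 1)) ^ p) + C := by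
  classical
  have hm1 : 1 < m := (one_lt_exp_iff.2 one_pos).trans_le (hm ▸ le_max_right _ _)
  have hu_eq : Set.EqOn (fun t => log (log t)) u (Set.Ici m) := fun t ht => by
    rw [hu t, if_neg (not_lt.2 ht)]
  have hu_mono : StrictMonoOn u (Set.Ici m) :=
    (strictMonoOn_log_log.mono (Set.Ici_subset_Ioi.2 hm1)).congr hu_eq
  refine ⟨0, fun J a b ha hab hbm hdisj => ?_⟩
  choose! n hn using fun j hj => exists_pow_succ_le_and_le_pow_add_three hm1 (ha j hj) (hbm j hj)
  rw [add_zero]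
  refine J.sum_le_tsum_of_sum_fiber_le n (fun _ => by positivity)
    (summable_two_div_nat_add_one_rpow hp) fun k => ?_
  have hlow : m ≤ m ^ (k + 1) := le_self_pow₀ hm1.le (by omega)
  have hwin : m ^ (k + 1) ≤ m ^ (k + 3) := pow_le_pow_right₀ hm1.le (by omega)
  have hsub : ∀ j ∈ {j ∈ J | n j = k},
      Set.Icc (a j) (b j) ⊆ Set.Icc (m ^ (k + 1)) (m ^ (k + 3)) := by
    intro j hj
    obtain ⟨hjJ, rfl⟩ := mem_filter.1 hj
    exact Set.Icc_subset_Icc (hn j hjJ).1 (hn j hjJ).2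
  calc ∑ j ∈ J with n j = k, (u (b j) - u (a j)) ^ p
      ≤ (u (m ^ (k + 3)) - u (m ^ (k + 1))) ^ p :=
        (hu_mono.mono fun _ ht => hlow.trans ht.1).sum_rpow_sub_le_rpow_sub hp.le hwin _
          (fun j hj => hab j (mem_filter.1 hj).1) hsub
          (fun j hj i hi hji => hdisj j (mem_filter.1 hj).1 i (mem_filter.1 hi).1 hji)
    _ ≤ (2 / (k + 1)) ^ p := by
      gcongr
      · exact sub_nonneg.2 (hu_mono.monotoneOn hlow (hlow.trans hwin) hwin)
      · rw [← hu_eq hlow, ← hu_eq (hlow.trans hwin)]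
        exact log_log_pow_add_three_sub_le hm1 k

/-- Packaged energy estimate from the proof that `ℝ₊` is `p`-parabolic for `p > 1`:
with `m = max{(ℓ+1)/(ℓ-1), e}` and `u(t) = log log t` for `t ≥ m` (constant `log log m`
below `m`), there is a constant `C = C(ℓ,p)` such that for any finite family of pairwise
disjoint intervals `[aⱼ,bⱼ] ⊂ [m,∞)` with `bⱼ ≤ m aⱼ`,
`∑ (u(bⱼ) - u(aⱼ))^p ≤ ∑_{i≥1} (2/i)^p + C`. -/
theorem halfline_energy_bound (ℓ p m : ℝ) (hℓ : 1 < ℓ) (hp : 1 < p)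
    (hm : m = max ((ℓ + 1) / (ℓ - 1)) (Real.exp 1))
    (u : ℝ → ℝ)
    (hu : ∀ t, u t = if t < m then Real.log (Real.log m) else Real.log (Real.log t)) :
    ∃ C : ℝ, ∀ {ι : Type} (J : Finset ι) (a b : ι → ℝ),
      (∀ j ∈ J, m ≤ a j) → (∀ j ∈ J, a j ≤ b j) → (∀ j ∈ J, b j ≤ m * a j) →
      (∀ j ∈ J, ∀ k ∈ J, j ≠ k → Disjoint (Set.Icc (a j) (b j)) (Set.Icc (a k) (b k))) →
      ∑ j ∈ J, (u (b j) - u (a j)) ^ p ≤ (∑' i : ℕ, (2 / ((i : ℝ) + 1)) ^ p) + C :=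
  halfline_energy_bound_general ℓ p m hp hm u hu
end
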